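/- Let X be a topological space and P a positive bounded linear operator on X →ᵇ ℝ. Then for every t ≥ 0 and every f ∈ X →ᵇ ℝ with f ≥ 0 one has exp(t P) f ≥ f; in particular exp(t P) f ≥ 0. (Positivity of the exponential of a positivity-preserving bounded operator, used in the proof of Lemma 4.1.) -/

import Mathlib

/-!
Every term `t ^ n / n! • P ^ n f` of the exponential series of `t • P` applied to `f ≥ 0` is
nonnegative, so the sum dominates its zeroth term `f`, since the positive cone is closed.
-/

open BoundedContinuousFunction

/-- The `TopologicalRing` instance on endomorphisms of `X →ᵇ ℝ`, provided here to help
instance synthesis for the operator exponential. -/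
instance {X : Type*} [TopologicalSpace X] :
    IsTopologicalRing ((X →ᵇ ℝ) →L[ℝ] (X →ᵇ ℝ)) :=
  letI : SeminormedRing ((X →ᵇ ℝ) →L[ℝ] (X →ᵇ ℝ)) := inferInstance
  inferInstance

open NormedSpace
open scoped Nat

instance BoundedContinuousFunction.instPosSMulMono {X : Type*} [TopologicalSpace X] :
    PosSMulMono ℝ (X →ᵇ ℝ) :=
  ⟨fun _ hc _ _ hfg x ↦ mul_le_mul_of_nonneg_left (hfg x) hc⟩

namespace ContinuousLinearMap

theorem hasSum_exp_apply {𝕂 E : Type*} [NontriviallyNormedField 𝕂] [CharZero 𝕂]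
    [ContinuousSMul ℚ 𝕂] [NormedAddCommGroup E] [NormedSpace 𝕂 E] [CompleteSpace E]
    (T : E →L[𝕂] E) (x : E) :
    HasSum (fun n ↦ (n !⁻¹ : 𝕂) • (T ^ n) x) (exp T x) :=
  (exp_series_hasSum_exp' (𝕂 := 𝕂) T).mapL (apply 𝕂 E x)

section Positive

variable {E : Type*} [NormedAddCommGroup E] [NormedSpace ℝ E] [PartialOrder E] {T : E →L[ℝ] E}

theorem pow_apply_nonneg (hT : ∀ x, 0 ≤ x → 0 ≤ T x) (n : ℕ) {x : E} (hx : 0 ≤ x) :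
    0 ≤ (T ^ n) x := by
  induction n with
  | zero => exact hx
  | succ n ih => rw [pow_succ']; exact hT _ ih

theorem le_exp_apply [CompleteSpace E] [IsOrderedAddMonoid E] [OrderClosedTopology E]
    [PosSMulMono ℝ E] (hT : ∀ x, 0 ≤ x → 0 ≤ T x) {x : E} (hx : 0 ≤ x) :
    x ≤ exp T x := by
  have h := le_hasSum (hasSum_exp_apply T x) 0 fun n _ ↦
    smul_nonneg (by positivity) (pow_apply_nonneg hT n hx)
  simpa using h

end Positive

end ContinuousLinearMap

/-- Positivity of the exponential of a positivity-preserving bounded operator: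
`exp(tP) f ≥ f` and in particular `exp(tP) f ≥ 0` for `f ≥ 0`. -/
theorem exp_positive_operator
    {X : Type*} [TopologicalSpace X]
    (P : (X →ᵇ ℝ) →L[ℝ] (X →ᵇ ℝ))
    (hP : ∀ f : X →ᵇ ℝ, 0 ≤ f → 0 ≤ P f)
    (t : ℝ) (ht : 0 ≤ t)
    (f : X →ᵇ ℝ) (hf : 0 ≤ f) :
    f ≤ NormedSpace.exp (t • P) f ∧ 0 ≤ NormedSpace.exp (t • P) f := by
  have htP : ∀ g : X →ᵇ ℝ, 0 ≤ g → 0 ≤ (t • P) g := fun g hg ↦ smul_nonneg ht (hP g hg)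
  have h := ContinuousLinearMap.le_exp_apply htP hf
  exact ⟨h, hf.trans h⟩
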